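/- arXiv:2208.08540 — 6 statements merged into one kernel-verified Lean document; each statement's English description precedes it below -/
import Mathlib

section
/- Closure under post-processing: let α and β be countable types, let P and Q be probability mass functions on α, and let M : α → PMF(β) be any randomized algorithm (probability kernel). If P ≈_{ε,δ} Q, then the distributions of M(a) for a ~ P and for a ~ Q (i.e., the binds P.bind M and Q.bind M) satisfy P.bind M ≈_{ε,δ} Q.bind M. -/
open scoped ENNReal

/-- The probability that a PMF assigns to an event. -/
noncomputable def pmfProb {α : Type*} (P : PMF α) (E : Set α) : ℝ :=
  (P.toOuterMeasure E).toReal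

/-- `(ε,δ)`-indistinguishability of two PMFs: for every event `E`,
`P(E) ≤ e^ε Q(E) + δ` and `Q(E) ≤ e^ε P(E) + δ`. -/
def ApproxDP {α : Type*} (ε δ : ℝ) (P Q : PMF α) : Prop :=
  ∀ E : Set α,
    pmfProb P E ≤ Real.exp ε * pmfProb Q E + δ ∧
    pmfProb Q E ≤ Real.exp ε * pmfProb P E + δ

lemma pmf_toOuterMeasure_ne_top {α : Type*} (P : PMF α) (E : Set α) :
    P.toOuterMeasure E ≠ ∞ := by
  have h1 : P.toOuterMeasure E ≤ 1 := by
    rw [PMF.toOuterMeasure_apply]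
    calc ∑' x, E.indicator P x ≤ ∑' x, P x :=
          ENNReal.tsum_le_tsum fun x => Set.indicator_le_self _ _ x
      _ = 1 := P.tsum_coe
  exact ne_top_of_le_ne_top ENNReal.one_ne_top h1

lemma pmfProb_le_one {α : Type*} (P : PMF α) (E : Set α) : pmfProb P E ≤ 1 := by
  have h1 : P.toOuterMeasure E ≤ 1 := by
    rw [PMF.toOuterMeasure_apply]
    calc ∑' x, E.indicator P x ≤ ∑' x, P x :=
          ENNReal.tsum_le_tsum fun x => Set.indicator_le_self _ _ x
      _ = 1 := P.tsum_coe
  have := ENNReal.toReal_mono ENNReal.one_ne_top h1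
  simpa [pmfProb] using this

lemma pmfProb_nonneg {α : Type*} (P : PMF α) (E : Set α) : 0 ≤ pmfProb P E :=
  ENNReal.toReal_nonneg

lemma pmfProb_eq_tsum {α : Type*} (P : PMF α) (E : Set α) :
    pmfProb P E = ∑' a, E.indicator (fun a => (P a).toReal) a := by
  rw [pmfProb, PMF.toOuterMeasure_apply,
    ENNReal.tsum_toReal_eq (fun a => ne_top_of_le_ne_top (P.apply_ne_top a)
      (Set.indicator_le_self _ _ a))]
  refine tsum_congr fun a => ?_
  by_cases ha : a ∈ E <;> simp [Set.indicator_apply, ha]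

lemma pmf_summable_toReal {α : Type*} (P : PMF α) :
    Summable (fun a => (P a).toReal) :=
  ENNReal.summable_toReal (by rw [P.tsum_coe]; exact ENNReal.one_ne_top)

/-- Key expectation bound: if `P(E) ≤ e^ε Q(E) + δ` for every event, then the same
holds for expectations of `[0,1]`-valued functions. -/
lemma key_bound {α : Type*} (ε δ : ℝ) (P Q : PMF α)
    (h : ∀ E : Set α, pmfProb P E ≤ Real.exp ε * pmfProb Q E + δ)
    (f : α → ℝ) (hf0 : ∀ a, 0 ≤ f a) (hf1 : ∀ a, f a ≤ 1) :
    ∑' a, (P a).toReal * f a ≤ Real.exp ε * ∑' a, (Q a).toReal * f a + δ := by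
  set S : Set α := {a | Real.exp ε * (Q a).toReal < (P a).toReal} with hS
  have hPsum := pmf_summable_toReal P
  have hQsum := pmf_summable_toReal Q
  have hPf : Summable (fun a => (P a).toReal * f a) := by
    refine Summable.of_nonneg_of_le (fun a => mul_nonneg ENNReal.toReal_nonneg (hf0 a))
      (fun a => ?_) hPsum
    calc (P a).toReal * f a ≤ (P a).toReal * 1 := by
          exact mul_le_mul_of_nonneg_left (hf1 a) ENNReal.toReal_nonneg
      _ = (P a).toReal := mul_one _
  have hQf : Summable (fun a => (Q a).toReal * f a) := by
    refine Summable.of_nonneg_of_le (fun a => mul_nonneg ENNReal.toReal_nonneg (hf0 a))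
      (fun a => ?_) hQsum
    calc (Q a).toReal * f a ≤ (Q a).toReal * 1 := by
          exact mul_le_mul_of_nonneg_left (hf1 a) ENNReal.toReal_nonneg
      _ = (Q a).toReal := mul_one _
  have hPind : Summable (S.indicator (fun a => (P a).toReal)) :=
    hPsum.indicator S
  have hQind : Summable (S.indicator (fun a => (Q a).toReal)) :=
    hQsum.indicator S
  -- pointwise inequality
  have hpt : ∀ a, (P a).toReal * f a - Real.exp ε * ((Q a).toReal * f a)
      ≤ S.indicator (fun a => (P a).toReal) a
        - Real.exp ε * S.indicator (fun a => (Q a).toReal) a := by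
    intro a
    by_cases ha : a ∈ S
    · simp only [Set.indicator_of_mem ha]
      have : (P a).toReal * f a - Real.exp ε * ((Q a).toReal * f a)
          = ((P a).toReal - Real.exp ε * (Q a).toReal) * f a := by ring
      rw [this]
      have hd : 0 ≤ (P a).toReal - Real.exp ε * (Q a).toReal := by
        have := le_of_lt (Set.mem_setOf.mp ha); linarith
      nlinarith [hf1 a, hf0 a]
    · simp only [Set.indicator_of_notMem ha]
      have hd : (P a).toReal - Real.exp ε * (Q a).toReal ≤ 0 := by
        have : ¬ (Real.exp ε * (Q a).toReal < (P a).toReal) := ha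
        linarith [not_lt.mp this]
      nlinarith [hf0 a, hf1 a]
  have hsum_le : ∑' a, ((P a).toReal * f a - Real.exp ε * ((Q a).toReal * f a))
      ≤ ∑' a, (S.indicator (fun a => (P a).toReal) a
        - Real.exp ε * S.indicator (fun a => (Q a).toReal) a) := by
    refine Summable.tsum_le_tsum hpt ?_ ?_
    · exact hPf.sub (hQf.mul_left _)
    · exact hPind.sub (hQind.mul_left _)
  have hL : ∑' a, ((P a).toReal * f a - Real.exp ε * ((Q a).toReal * f a))
      = (∑' a, (P a).toReal * f a) - Real.exp ε * ∑' a, (Q a).toReal * f a := by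
    rw [Summable.tsum_sub hPf (hQf.mul_left _), tsum_mul_left]
  have hR : ∑' a, (S.indicator (fun a => (P a).toReal) a
        - Real.exp ε * S.indicator (fun a => (Q a).toReal) a)
      = pmfProb P S - Real.exp ε * pmfProb Q S := by
    rw [Summable.tsum_sub hPind (hQind.mul_left _), tsum_mul_left,
      pmfProb_eq_tsum, pmfProb_eq_tsum]
  have hfinal : pmfProb P S - Real.exp ε * pmfProb Q S ≤ δ := by
    have := h S; linarith
  rw [hL] at hsum_le
  rw [hR] at hsum_le
  linarith

lemma pmfProb_bind {α β : Type*} (P : PMF α) (M : α → PMF β) (E : Set β) :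
    pmfProb (P.bind M) E = ∑' a, (P a).toReal * pmfProb (M a) E := by
  rw [pmfProb, PMF.toOuterMeasure_bind_apply,
    ENNReal.tsum_toReal_eq (fun a =>
      ENNReal.mul_ne_top (P.apply_ne_top a) (pmf_toOuterMeasure_ne_top (M a) E))]
  exact tsum_congr fun a => by rw [ENNReal.toReal_mul]; rfl

/-- Closure of `(ε,δ)`-indistinguishability under post-processing by a
probability kernel `M`. -/
theorem postprocessing {α β : Type*} [Countable α] [Countable β]
    (ε δ : ℝ) (hε : 0 ≤ ε) (hδ : 0 ≤ δ)
    (P Q : PMF α) (M : α → PMF β)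
    (h : ApproxDP ε δ P Q) :
    ApproxDP ε δ (P.bind M) (Q.bind M) := by
  intro E
  have hf0 : ∀ a, 0 ≤ pmfProb (M a) E := fun a => pmfProb_nonneg _ _
  have hf1 : ∀ a, pmfProb (M a) E ≤ 1 := fun a => pmfProb_le_one _ _
  constructor
  · rw [pmfProb_bind, pmfProb_bind]
    exact key_bound ε δ P Q (fun S => (h S).1) _ hf0 hf1
  · rw [pmfProb_bind, pmfProb_bind]
    exact key_bound ε δ Q P (fun S => (h S).2) _ hf0 hf1
end

section
/- Approximate-to-pure conversion for local randomizers: let X and Y be countable types and let R : X → PMF(Y) satisfy R(x) ≈_{ε,δ} R(x') for all x, x' ∈ X (i.e., R is an (ε,δ)-differentially private local randomizer). Then there exists a randomized algorithm R̃ : X → PMF(Y) such that R̃(x) ≈_{2ε} R̃(x') for all x, x' ∈ X (pure 2ε-differential privacy) and SD(R(x), R̃(x)) ≤ δ for every x ∈ X. -/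
open scoped ENNReal

/-- Statistical (total variation) distance between two PMFs: the supremum over
events of the difference of the probabilities. -/
noncomputable def statDist {α : Type*} (P Q : PMF α) : ℝ :=
  ⨆ E : Set α, |pmfProb P E - pmfProb Q E|

section

variable {α : Type*}

theorem ENNReal.tsum_sub_of_le {f g : α → ℝ≥0∞} (hg : ∑' y, g y ≠ ∞) (hgf : g ≤ f) :
    ∑' y, (f y - g y) = ∑' y, f y - ∑' y, g y :=
  ENNReal.eq_sub_of_add_eq hg <| by
    rw [← ENNReal.tsum_add]
    exact tsum_congr fun y => tsub_add_cancel_of_le (hgf y)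

namespace PMF

theorem toOuterMeasure_ne_top (P : PMF α) (E : Set α) : P.toOuterMeasure E ≠ ∞ := by
  rw [toOuterMeasure_apply]
  exact P.tsum_coe_indicator_ne_top E

theorem tsum_tsub_comm (P Q : PMF α) : ∑' y, (P y - Q y) = ∑' y, (Q y - P y) := by
  have split : ∀ P Q : PMF α, ∑' y, (P y - Q y) + ∑' y, min (P y) (Q y) = 1 := fun P Q => by
    rw [← ENNReal.tsum_add, ← P.tsum_coe]
    exact tsum_congr fun y => tsub_add_min
  have hfin : ∑' y, min (P y) (Q y) ≠ ∞ :=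
    ne_top_of_le_ne_top P.tsum_coe_ne_top (ENNReal.tsum_le_tsum fun y => min_le_left _ _)
  refine (ENNReal.add_left_inj hfin).1 ?_
  rw [split, ← split Q P]
  simp only [min_comm]

theorem toOuterMeasure_le_mul_of_forall_le {P Q : PMF α} {c : ℝ≥0∞} (h : ∀ y, P y ≤ c * Q y)
    (E : Set α) : P.toOuterMeasure E ≤ c * Q.toOuterMeasure E := by
  rw [toOuterMeasure_apply, toOuterMeasure_apply, ← ENNReal.tsum_mul_left]
  refine ENNReal.tsum_le_tsum fun y => ?_
  by_cases hy : y ∈ E <;> simp [hy, h y]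

theorem toOuterMeasure_le_add_tsum_tsub (P Q : PMF α) (E : Set α) :
    P.toOuterMeasure E ≤ Q.toOuterMeasure E + ∑' y, (P y - Q y) := by
  rw [toOuterMeasure_apply, toOuterMeasure_apply, ← ENNReal.tsum_add]
  refine ENNReal.tsum_le_tsum fun y => ?_
  by_cases hy : y ∈ E <;> simp [hy, le_add_tsub]

theorem tsum_tsub_mul_le {P Q : PMF α} {c d : ℝ≥0∞} (hc : c ≠ ∞)
    (h : ∀ E, P.toOuterMeasure E ≤ c * Q.toOuterMeasure E + d) :
    ∑' y, (P y - c * Q y) ≤ d := by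
  set E := {y | c * Q y < P y}
  have hsplit : ∑' y, (P y - c * Q y) + c * Q.toOuterMeasure E = P.toOuterMeasure E := by
    rw [toOuterMeasure_apply, toOuterMeasure_apply, ← ENNReal.tsum_mul_left, ← ENNReal.tsum_add]
    refine tsum_congr fun y => ?_
    by_cases hy : c * Q y < P y
    · simp [E, hy, tsub_add_cancel_of_le hy.le]
    · simp [E, hy, tsub_eq_zero_of_le (not_lt.1 hy)]
  refine (ENNReal.add_le_add_iff_right (ENNReal.mul_ne_top hc (Q.toOuterMeasure_ne_top E))).1 ?_
  rw [hsplit, add_comm]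
  exact h E

end PMF

theorem exists_pmf_between {a b : α → ℝ≥0∞} (hab : a ≤ b) (ha : ∑' y, a y ≤ 1)
    (hb : 1 ≤ ∑' y, b y) (hbT : ∑' y, b y ≠ ∞) : ∃ q : PMF α, a ≤ ⇑q ∧ ⇑q ≤ b := by
  set A := ∑' y, a y
  set B := ∑' y, b y
  set t := (1 - A) / (B - A)
  have ht : t ≤ 1 := ENNReal.div_le_of_le_mul (by rw [one_mul]; exact tsub_le_tsub_right hb A)
  have hsum : ∑' y, (a y + t * (b y - a y)) = 1 := by
    rw [ENNReal.tsum_add, ENNReal.tsum_mul_left,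
      ENNReal.tsum_sub_of_le (ne_top_of_le_ne_top ENNReal.one_ne_top ha) hab]
    rcases eq_or_ne (B - A) 0 with h0 | h0
    · rw [h0, mul_zero, add_zero]
      exact le_antisymm ha (hb.trans (tsub_eq_zero_iff_le.1 h0))
    · rw [ENNReal.div_mul_cancel h0 (ENNReal.sub_ne_top hbT), add_tsub_cancel_of_le ha]
  refine ⟨⟨fun y => a y + t * (b y - a y), ENNReal.summable.hasSum_iff.2 hsum⟩,
    fun y => le_self_add, fun y => ?_⟩
  calc a y + t * (b y - a y) ≤ a y + (b y - a y) := by gcongr; exact mul_le_of_le_one_left' ht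
    _ = b y := add_tsub_cancel_of_le (hab y)

theorem exists_pmf_between_tsum_tsub_le (r : PMF α) {l u : α → ℝ≥0∞} {d : ℝ≥0∞} (hlu : l ≤ u)
    (hl : ∑' y, l y ≤ 1) (hu : 1 ≤ ∑' y, u y) (huT : ∑' y, u y ≠ ∞)
    (hru : ∑' y, (r y - u y) ≤ d) (hlr : ∑' y, (l y - r y) ≤ d) :
    ∃ q : PMF α, l ≤ ⇑q ∧ ⇑q ≤ u ∧ ∑' y, (r y - q y) ≤ d := by
  set f : α → ℝ≥0∞ := fun y => max (l y) (min (r y) (u y))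
  have hlf : l ≤ f := fun y => le_max_left _ _
  have hfu : f ≤ u := fun y => max_le (hlu y) (min_le_right _ _)
  rcases le_total (∑' y, f y) 1 with hf | hf
  · obtain ⟨q, hfq, hqu⟩ := exists_pmf_between hfu hf hu huT
    refine ⟨q, hlf.trans hfq, hqu, (ENNReal.tsum_le_tsum fun y => ?_).trans hru⟩
    calc r y - q y ≤ r y - min (r y) (u y) :=
          tsub_le_tsub_left ((le_max_right _ _).trans (hfq y)) _
      _ = r y - u y := tsub_min
  · obtain ⟨q, hlq, hqf⟩ := exists_pmf_between hlf hl hf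
      (ne_top_of_le_ne_top huT (ENNReal.tsum_le_tsum hfu))
    refine ⟨q, hlq, hqf.trans hfu, ?_⟩
    rw [r.tsum_tsub_comm q]
    refine (ENNReal.tsum_le_tsum fun y => tsub_le_iff_right.2 ?_).trans hlr
    calc q y ≤ max (l y) (r y) := (hqf y).trans (max_le_max le_rfl (min_le_left _ _))
      _ ≤ l y - r y + r y := max_le le_tsub_add le_add_self

theorem pmfProb_le_iff {P Q : PMF α} {E : Set α} {a b : ℝ} (ha : 0 ≤ a) (hb : 0 ≤ b) :
    pmfProb P E ≤ a * pmfProb Q E + b ↔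
      P.toOuterMeasure E ≤ ENNReal.ofReal a * Q.toOuterMeasure E + ENNReal.ofReal b := by
  rw [pmfProb, pmfProb, ← ENNReal.ofReal_le_ofReal_iff (by positivity),
    ENNReal.ofReal_toReal (P.toOuterMeasure_ne_top E), ENNReal.ofReal_add (by positivity) hb,
    ENNReal.ofReal_mul ha, ENNReal.ofReal_toReal (Q.toOuterMeasure_ne_top E)]

theorem approxDP_zero_of_forall_le {P Q : PMF α} {ε : ℝ}
    (hPQ : ∀ y, P y ≤ ENNReal.ofReal (Real.exp ε) * Q y)
    (hQP : ∀ y, Q y ≤ ENNReal.ofReal (Real.exp ε) * P y) : ApproxDP ε 0 P Q := fun E => by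
  rw [pmfProb_le_iff (Real.exp_nonneg ε) le_rfl, pmfProb_le_iff (Real.exp_nonneg ε) le_rfl,
    ENNReal.ofReal_zero, add_zero, add_zero]
  exact ⟨PMF.toOuterMeasure_le_mul_of_forall_le hPQ E,
    PMF.toOuterMeasure_le_mul_of_forall_le hQP E⟩

theorem statDist_le_of_tsum_tsub_le {P Q : PMF α} {δ : ℝ} (hδ : 0 ≤ δ)
    (h : ∑' y, (P y - Q y) ≤ ENNReal.ofReal δ) : statDist P Q ≤ δ := by
  have sub_le : ∀ P Q : PMF α, ∑' y, (P y - Q y) ≤ ENNReal.ofReal δ →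
      ∀ E, pmfProb P E - pmfProb Q E ≤ δ := fun P Q h E => by
    have := (pmfProb_le_iff zero_le_one hδ (P := P) (Q := Q) (E := E)).2 <| by
      rw [ENNReal.ofReal_one, one_mul]
      exact (P.toOuterMeasure_le_add_tsum_tsub Q E).trans (by gcongr)
    linarith
  exact ciSup_le fun E =>
    abs_sub_le_iff.2 ⟨sub_le P Q h E, sub_le Q P (P.tsum_tsub_comm Q ▸ h) E⟩

namespace ApproxDP

variable {ε δ : ℝ} {P Q : PMF α}

theorem tsum_tsub_le (h : ApproxDP ε δ P Q) (hδ : 0 ≤ δ) :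
    ∑' y, (P y - ENNReal.ofReal (Real.exp ε) * Q y) ≤ ENNReal.ofReal δ :=
  PMF.tsum_tsub_mul_le ENNReal.ofReal_ne_top fun E =>
    (pmfProb_le_iff (Real.exp_nonneg ε) hδ).1 (h E).1

theorem tsum_inv_mul_tsub_le (h : ApproxDP ε δ P Q) (hε : 0 ≤ ε) (hδ : 0 ≤ δ) :
    ∑' y, ((ENNReal.ofReal (Real.exp ε))⁻¹ * Q y - P y) ≤ ENNReal.ofReal δ := by
  set c := ENNReal.ofReal (Real.exp ε)
  have hc : c ≠ 0 := (ENNReal.ofReal_pos.2 (Real.exp_pos ε)).ne'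
  have hsymm : ApproxDP ε δ Q P := fun E => (h E).symm
  calc ∑' y, (c⁻¹ * Q y - P y) = c⁻¹ * ∑' y, (Q y - c * P y) := by
        rw [← ENNReal.tsum_mul_left]
        refine tsum_congr fun y => ?_
        rw [ENNReal.mul_sub fun _ _ => ENNReal.inv_ne_top.2 hc, ← mul_assoc,
          ENNReal.inv_mul_cancel hc ENNReal.ofReal_ne_top, one_mul]
    _ ≤ 1 * ENNReal.ofReal δ := by
        gcongr
        · exact ENNReal.inv_le_one.2 (ENNReal.one_le_ofReal.2 (Real.one_le_exp hε))
        · exact hsymm.tsum_tsub_le hδ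
    _ = ENNReal.ofReal δ := one_mul _

end ApproxDP

end

theorem approx_to_pure_general {X Y : Type*}
    (ε δ : ℝ) (hε : 0 ≤ ε) (hδ0 : 0 ≤ δ)
    (R : X → PMF Y)
    (hR : ∀ x x' : X, ApproxDP ε δ (R x) (R x')) :
    ∃ Rt : X → PMF Y,
      (∀ x x' : X, ApproxDP (2 * ε) 0 (Rt x) (Rt x')) ∧
      ∀ x : X, statDist (R x) (Rt x) ≤ δ := by
  rcases isEmpty_or_nonempty X with hX | ⟨⟨x₀⟩⟩
  · exact ⟨isEmptyElim, isEmptyElim, isEmptyElim⟩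
  set c := ENNReal.ofReal (Real.exp ε)
  have hc : 1 ≤ c := ENNReal.one_le_ofReal.2 (Real.one_le_exp hε)
  have hc0 : c ≠ 0 := (zero_lt_one.trans_le hc).ne'
  have hcT : c ≠ ∞ := ENNReal.ofReal_ne_top
  have hmass : ∀ a, ∑' y, a * R x₀ y = a := fun a => by
    rw [ENNReal.tsum_mul_left, PMF.tsum_coe, mul_one]
  have band : ∀ x, ∃ q : PMF Y, (fun y => c⁻¹ * R x₀ y) ≤ ⇑q ∧ ⇑q ≤ (fun y => c * R x₀ y) ∧
      ∑' y, (R x y - q y) ≤ ENNReal.ofReal δ := fun x =>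
    exists_pmf_between_tsum_tsub_le (R x)
      (fun y => mul_le_mul_left ((ENNReal.inv_le_one.2 hc).trans hc) _)
      ((hmass _).trans_le (ENNReal.inv_le_one.2 hc)) (hc.trans_eq (hmass c).symm)
      ((hmass c).trans_ne hcT)
      ((hR x x₀).tsum_tsub_le hδ0) ((hR x x₀).tsum_inv_mul_tsub_le hε hδ0)
  choose Rt hlow hup hclose using band
  have hfactor : ∀ x x' y, Rt x y ≤ ENNReal.ofReal (Real.exp (2 * ε)) * Rt x' y := fun x x' y =>
    calc Rt x y ≤ c * R x₀ y := hup x y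
      _ = c * c * (c⁻¹ * R x₀ y) := by
        rw [mul_assoc c c, ← mul_assoc c c⁻¹, ENNReal.mul_inv_cancel hc0 hcT, one_mul]
      _ ≤ ENNReal.ofReal (Real.exp (2 * ε)) * Rt x' y := by
        rw [two_mul, Real.exp_add, ENNReal.ofReal_mul (Real.exp_nonneg ε)]
        exact mul_le_mul_right (hlow x' y) _
  exact ⟨Rt, fun x x' => approxDP_zero_of_forall_le (hfactor x x') (hfactor x' x),
    fun x => statDist_le_of_tsum_tsub_le hδ0 (hclose x)⟩

/-- Every `(ε,δ)`-differentially private local randomizer is within statistical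
distance `δ` (pointwise) of a pure `2ε`-differentially private local randomizer. -/
theorem approx_to_pure {X Y : Type*} [Countable X] [Countable Y]
    (ε δ : ℝ) (hε : 0 ≤ ε) (hδ0 : 0 ≤ δ) (hδ1 : δ ≤ 1)
    (R : X → PMF Y)
    (hR : ∀ x x' : X, ApproxDP ε δ (R x) (R x')) :
    ∃ Rt : X → PMF Y,
      (∀ x x' : X, ApproxDP (2 * ε) 0 (Rt x) (Rt x')) ∧
      ∀ x : X, statDist (R x) (Rt x) ≤ δ :=
  approx_to_pure_general ε δ hε hδ0 R hR
end

section
/- Tail bound for geometric convolutions (explicit form): let n be a positive integer, β ∈ (0,1), ℓ ∈ (0,1/2], and p_1, …, p_n ∈ (0,1/2] with ℓ ≤ p_i for every i ∈ [n]. If η_1, …, η_n are independent random variables with η_i ~ Geo(p_i), then Pr[∑_{i=1}^n η_i > n + (2n/ℓ)·ln(1/ℓ) + (2/ℓ)·ln(1/β)] ≤ β. -/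
open MeasureTheory ProbabilityTheory


lemma aux_lintegral_prod {Ω : Type*} [MeasurableSpace Ω]
    {μ : Measure Ω} [IsProbabilityMeasure μ] {ι : Type*} {g : ι → Ω → ENNReal}
    (hmeas : ∀ i, Measurable (g i))
    (hind : iIndepFun g μ) (s : Finset ι) :
    ∫⁻ ω, ∏ i ∈ s, g i ω ∂μ = ∏ i ∈ s, ∫⁻ ω, g i ω ∂μ := by
  classical
  induction s using Finset.induction_on with
  | empty => simp
  | @insert a s hi ih =>
    rw [Finset.prod_insert hi]
    simp_rw [Finset.prod_insert hi]
    rw [← ih]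
    have hIndep : IndepFun (g a) (fun ω => ∏ j ∈ s, g j ω) μ := by
      have h := (hind.indepFun_finsetProd_of_notMem hmeas hi).symm
      have he : (∏ j ∈ s, g j) = fun ω => ∏ j ∈ s, g j ω := by
        funext ω; simp [Finset.prod_apply]
      rwa [he] at h
    have := lintegral_mul_eq_lintegral_mul_lintegral_of_indepFun''
      (μ := μ) (hmeas a).aemeasurable
      (Finset.measurable_prod s (fun j _ => hmeas j)).aemeasurable hIndep
    simpa [Finset.prod_apply] using this

lemma aux_key_ineq {ℓ q : ℝ} (hℓ0 : 0 < ℓ) (hℓ2 : ℓ ≤ 1/2) (hq1 : q ≤ 1/2) (hℓq : ℓ ≤ q) :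
    Real.exp (ℓ/2) * (1 - q) ≤ 1 - ℓ/2 := by
  have h1 : 1 - ℓ/2 ≤ Real.exp (-(ℓ/2)) := by
    have := Real.add_one_le_exp (-(ℓ/2)); linarith
  have h2 : Real.exp (-(ℓ/2)) = (Real.exp (ℓ/2))⁻¹ := Real.exp_neg _
  have h3 : (0:ℝ) < Real.exp (ℓ/2) := Real.exp_pos _
  have h4 : (1 - ℓ/2) * Real.exp (ℓ/2) ≤ 1 := by
    rw [h2] at h1
    calc (1 - ℓ/2) * Real.exp (ℓ/2) ≤ (Real.exp (ℓ/2))⁻¹ * Real.exp (ℓ/2) := by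
          apply mul_le_mul_of_nonneg_right h1 h3.le
      _ = 1 := inv_mul_cancel₀ h3.ne'
  have h5 : 1 ≤ Real.exp (ℓ/2) := Real.one_le_exp (by linarith)
  nlinarith [mul_le_mul_of_nonneg_right hℓq h3.le]

lemma aux_mgf_le {Ω : Type*} [MeasurableSpace Ω] (μ : Measure Ω) [IsProbabilityMeasure μ]
    {ℓ q : ℝ} (hℓ0 : 0 < ℓ) (hℓ2 : ℓ ≤ 1/2) (hq0 : 0 < q) (hq1 : q ≤ 1/2) (hℓq : ℓ ≤ q)
    (X : Ω → ℕ) (hX : Measurable X)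
    (hgeo : ∀ j : ℕ, 1 ≤ j → μ {ω | X ω = j} = ENNReal.ofReal ((1 - q) ^ (j - 1) * q)) :
    ∫⁻ ω, (ENNReal.ofReal (Real.exp (ℓ/2))) ^ X ω ∂μ ≤ ENNReal.ofReal (Real.exp (ℓ/2) / ℓ) := by
  set c : ENNReal := ENNReal.ofReal (Real.exp (ℓ/2)) with hc
  have hfib : ∀ k : ℕ, μ (X ⁻¹' {k}) = μ {ω | X ω = k} := fun k => rfl
  -- total mass over fibers
  have htot : ∑' k : ℕ, μ {ω | X ω = k} = 1 := by
    have hu : (⋃ k : ℕ, X ⁻¹' {k}) = Set.univ := by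
      ext ω; simp
    have hd : Pairwise (Function.onFun Disjoint fun k : ℕ => X ⁻¹' {k}) := by
      intro i j hij
      exact Set.disjoint_left.2 (fun ω hi hj => hij (by
        simp only [Set.mem_preimage, Set.mem_singleton_iff] at hi hj
        rw [← hi, ← hj]))
    have := measure_iUnion (μ := μ) hd (fun k => hX (measurableSet_singleton k))
    rw [hu, measure_univ] at this
    exact this.symm
  -- geometric series for the tail
  have hofq : ENNReal.ofReal 1 - ENNReal.ofReal (1 - q) = ENNReal.ofReal q := by
    rw [← ENNReal.ofReal_sub _ (by linarith)]
    norm_num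
  have htail : ∑' k : ℕ, μ {ω | X ω = k + 1} = 1 := by
    have h1 : ∀ k : ℕ, μ {ω | X ω = k + 1}
        = ENNReal.ofReal (1 - q) ^ k * ENNReal.ofReal q := by
      intro k
      rw [hgeo (k+1) (by omega)]
      simp only [Nat.add_sub_cancel]
      rw [ENNReal.ofReal_mul (pow_nonneg (by linarith) k), ENNReal.ofReal_pow (by linarith)]
    simp_rw [h1]
    rw [ENNReal.tsum_mul_right, ENNReal.tsum_geometric]
    rw [← ENNReal.ofReal_one, hofq, ENNReal.ofReal_one]
    exact ENNReal.inv_mul_cancel (by simpa using hq0) ENNReal.ofReal_ne_top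
  -- μ {X = 0} = 0
  have h0 : μ {ω | X ω = 0} = 0 := by
    have := tsum_eq_zero_add' (f := fun k => μ {ω | X ω = k}) ENNReal.summable
    rw [htot, htail] at this
    have h2 : μ {ω | X ω = 0} + 1 = 0 + 1 := by rw [zero_add]; exact this.symm
    exact (ENNReal.add_left_inj ENNReal.one_ne_top).mp h2
  -- compute the lintegral
  have hmap : ∫⁻ ω, c ^ X ω ∂μ = ∑' k : ℕ, c ^ k * μ {ω | X ω = k} := by
    rw [← lintegral_map (f := fun k : ℕ => c ^ k) measurable_from_top hX,
      lintegral_countable']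
    congr 1
    funext k
    rw [Measure.map_apply hX (measurableSet_singleton k), hfib]
  rw [hmap]
  rw [tsum_eq_zero_add' (f := fun k => c ^ k * μ {ω | X ω = k}) ENNReal.summable]
  rw [h0, mul_zero, zero_add]
  have hterm : ∀ k : ℕ, c ^ (k+1) * μ {ω | X ω = k + 1}
      = (c * ENNReal.ofReal q) * (c * ENNReal.ofReal (1 - q)) ^ k := by
    intro k
    rw [hgeo (k+1) (by omega)]
    simp only [Nat.add_sub_cancel]
    rw [ENNReal.ofReal_mul (pow_nonneg (by linarith) k), ENNReal.ofReal_pow (by linarith),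
      pow_succ, mul_pow]
    ring
  simp_rw [hterm]
  rw [ENNReal.tsum_mul_left, ENNReal.tsum_geometric]
  -- bound the two factors
  have hb1 : c * ENNReal.ofReal (1 - q) ≤ ENNReal.ofReal (1 - ℓ/2) := by
    rw [hc, ← ENNReal.ofReal_mul (Real.exp_pos _).le]
    exact ENNReal.ofReal_le_ofReal (aux_key_ineq hℓ0 hℓ2 hq1 hℓq)
  have hb2 : (1 - c * ENNReal.ofReal (1 - q))⁻¹ ≤ ENNReal.ofReal (2/ℓ) := by
    have hlow : ENNReal.ofReal (ℓ/2) ≤ 1 - c * ENNReal.ofReal (1 - q) := by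
      have : ENNReal.ofReal (ℓ/2) ≤ ENNReal.ofReal 1 - ENNReal.ofReal (1 - ℓ/2) := by
        rw [← ENNReal.ofReal_sub _ (by linarith)]
        exact ENNReal.ofReal_le_ofReal (by linarith)
      refine this.trans ?_
      rw [ENNReal.ofReal_one]
      exact tsub_le_tsub_left hb1 1
    calc (1 - c * ENNReal.ofReal (1 - q))⁻¹ ≤ (ENNReal.ofReal (ℓ/2))⁻¹ :=
          ENNReal.inv_le_inv' hlow
      _ = ENNReal.ofReal (2/ℓ) := by
          rw [← ENNReal.ofReal_inv_of_pos (by positivity)]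
          congr 1
          field_simp
  calc c * ENNReal.ofReal q * (1 - c * ENNReal.ofReal (1 - q))⁻¹
      ≤ c * ENNReal.ofReal q * ENNReal.ofReal (2/ℓ) := by
        exact mul_le_mul_right hb2 _
    _ = ENNReal.ofReal (Real.exp (ℓ/2) * q * (2/ℓ)) := by
        rw [hc, ← ENNReal.ofReal_mul (Real.exp_pos _).le,
          ← ENNReal.ofReal_mul (by positivity)]
    _ ≤ ENNReal.ofReal (Real.exp (ℓ/2) / ℓ) := by
        apply ENNReal.ofReal_le_ofReal
        rw [div_eq_mul_inv]
        have : q * (2/ℓ) ≤ ℓ⁻¹ := by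
          rw [div_eq_mul_inv]
          calc q * (2 * ℓ⁻¹) = (2 * q) * ℓ⁻¹ := by ring
            _ ≤ 1 * ℓ⁻¹ := by
                apply mul_le_mul_of_nonneg_right (by linarith) (by positivity)
            _ = ℓ⁻¹ := one_mul _
        calc Real.exp (ℓ/2) * q * (2/ℓ) = Real.exp (ℓ/2) * (q * (2/ℓ)) := by ring
          _ ≤ Real.exp (ℓ/2) * ℓ⁻¹ :=
              mul_le_mul_of_nonneg_left this (Real.exp_pos _).le

lemma aux_exp_identity (n : ℕ) (β ℓ : ℝ) (hβ0 : 0 < β) (hℓ0 : 0 < ℓ) :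
    (Real.exp (ℓ/2) / ℓ) ^ n
      = Real.exp ((ℓ/2) * ((n:ℝ) + (2*n/ℓ)*Real.log (1/ℓ) + (2/ℓ)*Real.log (1/β))) * β := by
  have h1 : (ℓ/2) * ((n:ℝ) + (2*n/ℓ)*Real.log (1/ℓ) + (2/ℓ)*Real.log (1/β))
      = (n:ℝ)*(ℓ/2) + ((n:ℝ)*Real.log (1/ℓ) + Real.log (1/β)) := by
    field_simp
    ring
  rw [h1, Real.exp_add, Real.exp_add, Real.exp_nat_mul, Real.exp_nat_mul,
    Real.exp_log (by positivity), Real.exp_log (by positivity)]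
  rw [div_pow, one_div, inv_pow]
  field_simp

/-- Tail bound for a sum of independent geometric random variables
(`Geo(p)` supported on `{1,2,…}` with `Pr[η = j] = (1-p)^(j-1) p`):
with probability at least `1 - β`, the sum is at most
`n + (2n/ℓ)·ln(1/ℓ) + (2/ℓ)·ln(1/β)` where `ℓ` lower-bounds each `p i`. -/
theorem geometric_convolution_tail
    {Ω : Type*} [MeasurableSpace Ω] (μ : Measure Ω) [IsProbabilityMeasure μ]
    (n : ℕ) (hn : 0 < n) (β ℓ : ℝ)
    (hβ : β ∈ Set.Ioo (0 : ℝ) 1) (hℓ : ℓ ∈ Set.Ioc (0 : ℝ) (1 / 2))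
    (p : Fin n → ℝ) (hp : ∀ i, p i ∈ Set.Ioc (0 : ℝ) (1 / 2))
    (hℓp : ∀ i, ℓ ≤ p i)
    (η : Fin n → Ω → ℕ) (hmeas : ∀ i, Measurable (η i))
    (hind : iIndepFun η μ)
    (hgeo : ∀ i, ∀ j : ℕ, 1 ≤ j →
      μ {ω | η i ω = j} = ENNReal.ofReal ((1 - p i) ^ (j - 1) * p i)) :
    μ {ω | (n : ℝ) + (2 * n / ℓ) * Real.log (1 / ℓ) + (2 / ℓ) * Real.log (1 / β)
        < ∑ i, (η i ω : ℝ)} ≤ ENNReal.ofReal β := by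

  obtain ⟨hβ0, hβ1⟩ := hβ
  obtain ⟨hℓ0, hℓ2⟩ := hℓ
  set t : ℝ := ℓ/2 with ht
  set K : ℝ := (n:ℝ) + (2*n/ℓ)*Real.log (1/ℓ) + (2/ℓ)*Real.log (1/β) with hK
  set c : ENNReal := ENNReal.ofReal (Real.exp t) with hc
  set g : Fin n → Ω → ENNReal := fun i ω => c ^ η i ω with hg
  have hgmeas : ∀ i, Measurable (g i) := fun i => measurable_from_top.comp (hmeas i)
  have hgind : iIndepFun g μ :=
    hind.comp (fun _ k => c ^ k) (fun _ => measurable_from_top)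
  have hmgf : ∀ i, ∫⁻ ω, g i ω ∂μ ≤ ENNReal.ofReal (Real.exp t / ℓ) := fun i =>
    aux_mgf_le μ hℓ0 hℓ2 (hp i).1 (hp i).2 (hℓp i) (η i) (hmeas i) (hgeo i)
  set ε : ENNReal := ENNReal.ofReal (Real.exp (t * K)) with hε
  have hsubset : {ω | K < ∑ i, (η i ω : ℝ)} ⊆ {ω | ε ≤ ∏ i, g i ω} := by
    intro ω hω
    simp only [Set.mem_setOf_eq] at hω ⊢
    have hprod : ∏ i, g i ω = c ^ (∑ i, η i ω) :=
      Finset.prod_pow_eq_pow_sum _ _ _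
    rw [hprod, hc, ← ENNReal.ofReal_pow (Real.exp_pos _).le, ← Real.exp_nat_mul]
    apply ENNReal.ofReal_le_ofReal
    apply Real.exp_le_exp.2
    have hcast : ((∑ i, η i ω : ℕ) : ℝ) = ∑ i, (η i ω : ℝ) := by push_cast; rfl
    rw [hcast, mul_comm t K]
    exact mul_le_mul_of_nonneg_right hω.le (by positivity)
  have hmarkov : ε * μ {ω | K < ∑ i, (η i ω : ℝ)} ≤ ∫⁻ ω, ∏ i, g i ω ∂μ := by
    calc ε * μ {ω | K < ∑ i, (η i ω : ℝ)} ≤ ε * μ {ω | ε ≤ ∏ i, g i ω} :=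
          mul_le_mul_right (measure_mono hsubset) ε
      _ ≤ ∫⁻ ω, ∏ i, g i ω ∂μ :=
          mul_meas_ge_le_lintegral₀
            (Finset.aemeasurable_fun_prod _ (fun i _ => (hgmeas i).aemeasurable)) ε
  have hprodint : ∫⁻ ω, ∏ i, g i ω ∂μ ≤ ε * ENNReal.ofReal β := by
    rw [aux_lintegral_prod hgmeas hgind]
    calc ∏ i, ∫⁻ ω, g i ω ∂μ ≤ ∏ _i : Fin n, ENNReal.ofReal (Real.exp t / ℓ) :=
          Finset.prod_le_prod' (fun i _ => hmgf i)
      _ = ENNReal.ofReal ((Real.exp t / ℓ) ^ n) := by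
          rw [Finset.prod_const, Finset.card_univ, Fintype.card_fin,
            ENNReal.ofReal_pow (by positivity)]
      _ = ε * ENNReal.ofReal β := by
          rw [ht, aux_exp_identity n β ℓ hβ0 hℓ0, ← hK, ← ht, hε,
            ENNReal.ofReal_mul (Real.exp_pos _).le]
  have hfinal : ε * μ {ω | K < ∑ i, (η i ω : ℝ)} ≤ ε * ENNReal.ofReal β :=
    hmarkov.trans hprodint
  have hε0 : ε ≠ 0 := by
    simp [hε, Real.exp_pos]
  have hεtop : ε ≠ ⊤ := ENNReal.ofReal_ne_top
  exact (ENNReal.mul_le_mul_iff_right hε0 hεtop).1 hfinal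
end

section
/- Explicit Chernoff bound for geometric convolutions: let n be a positive integer, ℓ ∈ (0,1/2], and p_1, …, p_n ∈ (0,1/2] with ℓ ≤ p_i for every i ∈ [n]. Let η_1, …, η_n be independent with η_i ~ Geo(p_i), and set b = (1 − ℓ/2)/(1 − ℓ). Then for every real v > 0, Pr[∑_{i=1}^n η_i > v] ≤ b^{n−v} · (1/ℓ)^n (where b^{n−v} denotes the real power). -/
open MeasureTheory ProbabilityTheory

/-- Explicit Chernoff bound for a sum of independent geometric random variables
(`Geo(p)` supported on `{1,2,…}` with `Pr[η = j] = (1-p)^(j-1) p`):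
with `b = (1 - ℓ/2)/(1 - ℓ)`, for every `v > 0`,
`Pr[∑ η_i > v] ≤ b^(n - v) · (1/ℓ)^n`. -/
theorem geometric_convolution_chernoff
    {Ω : Type*} [MeasurableSpace Ω] (μ : Measure Ω) [IsProbabilityMeasure μ]
    (n : ℕ) (hn : 0 < n) (ℓ : ℝ) (hℓ : ℓ ∈ Set.Ioc (0 : ℝ) (1 / 2))
    (p : Fin n → ℝ) (hp : ∀ i, p i ∈ Set.Ioc (0 : ℝ) (1 / 2))
    (hℓp : ∀ i, ℓ ≤ p i)
    (η : Fin n → Ω → ℕ) (hmeas : ∀ i, Measurable (η i))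
    (hind : iIndepFun η μ)
    (hgeo : ∀ i, ∀ j : ℕ, 1 ≤ j →
      μ {ω | η i ω = j} = ENNReal.ofReal ((1 - p i) ^ (j - 1) * p i)) :
    ∀ v : ℝ, 0 < v →
      μ {ω | v < ∑ i, (η i ω : ℝ)} ≤
        ENNReal.ofReal (((1 - ℓ / 2) / (1 - ℓ)) ^ ((n : ℝ) - v) * (1 / ℓ) ^ n) := by
  intro v hv
  obtain ⟨hℓ0, hℓ2⟩ := hℓ
  set b : ℝ := (1 - ℓ / 2) / (1 - ℓ) with hbdef
  have hℓ1 : ℓ < 1 := lt_of_le_of_lt hℓ2 (by norm_num)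
  have h1ℓ : (0 : ℝ) < 1 - ℓ := by linarith
  have hb1 : 1 < b := by
    rw [hbdef, lt_div_iff₀ h1ℓ]; linarith
  have hb0 : (0 : ℝ) < b := by linarith
  set t : ℝ := Real.log b with htdef
  have ht : 0 < t := Real.log_pos hb1
  have hexp : Real.exp t = b := Real.exp_log hb0
  clear_value t b
  -- per-index facts
  have hq0 : ∀ i, 0 < p i := fun i => (hp i).1
  have hq2 : ∀ i, p i ≤ 1 / 2 := fun i => (hp i).2
  have hq1 : ∀ i, 0 ≤ 1 - p i := fun i => by have := hq2 i; linarith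
  have hbq : ∀ i, b * (1 - p i) ≤ 1 - ℓ / 2 := by
    intro i
    have h1 : 1 - p i ≤ 1 - ℓ := by have := hℓp i; linarith
    have h2 : b * (1 - ℓ) = 1 - ℓ / 2 := by
      rw [hbdef]; field_simp
    calc b * (1 - p i) ≤ b * (1 - ℓ) := by
          apply mul_le_mul_of_nonneg_left h1 hb0.le
      _ = 1 - ℓ / 2 := h2
  have hbq1 : ∀ i, b * (1 - p i) < 1 := fun i =>
    lt_of_le_of_lt (hbq i) (by linarith)
  have hbq0 : ∀ i, 0 ≤ b * (1 - p i) := fun i => mul_nonneg hb0.le (hq1 i)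
  have hrℓ : ∀ i, ℓ / 2 ≤ 1 - b * (1 - p i) := fun i => by have := hbq i; linarith
  -- the map measures
  have hmap : ∀ i (j : ℕ), (μ.map (η i)) {j} = μ {ω | η i ω = j} := by
    intro i j
    rw [Measure.map_apply (hmeas i) (measurableSet_singleton j)]
    rfl
  -- total pmf mass is 1
  have hsum1 : ∀ i, ∑' k : ℕ, ENNReal.ofReal ((1 - p i) ^ k * p i) = 1 := by
    intro i
    rw [← ENNReal.ofReal_tsum_of_nonneg (fun k => mul_nonneg (pow_nonneg (hq1 i) k) (hq0 i).le)]
    · rw [tsum_mul_right, tsum_geometric_of_lt_one (hq1 i) (by have := hq0 i; linarith)]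
      rw [show (1 : ℝ) - (1 - p i) = p i by ring, inv_mul_cancel₀ (hq0 i).ne']
      exact ENNReal.ofReal_one
    · exact (summable_geometric_of_lt_one (hq1 i)
        (by have := hq0 i; linarith)).mul_right _
  -- η i = 0 has measure zero
  have hzero : ∀ i, μ {ω | η i ω = 0} = 0 := by
    intro i
    have hpm : IsProbabilityMeasure (μ.map (η i)) :=
      Measure.isProbabilityMeasure_map (hmeas i).aemeasurable
    have huniv : ∑' j : ℕ, (μ.map (η i)) {j} = 1 := by
      have hU : (⋃ j : ℕ, ({j} : Set ℕ)) = Set.univ := by ext x; simp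
      rw [← measure_iUnion (fun a b hab => by
          simpa [Function.onFun, Set.disjoint_singleton] using hab)
        (fun j => measurableSet_singleton j), hU]
      exact measure_univ
    rw [tsum_eq_zero_add' ENNReal.summable] at huniv
    have hterm : ∑' k : ℕ, (μ.map (η i)) {k + 1} = 1 := by
      rw [← hsum1 i]
      congr 1; ext k
      rw [hmap, hgeo i (k + 1) (by omega)]
      simp
    rw [hterm] at huniv
    have h0 : (μ.map (η i)) {0} + 1 = 0 + 1 := by rw [huniv, zero_add]
    have h1 := WithTop.add_right_cancel (by norm_num : (1 : ENNReal) ≠ ⊤) h0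
    rw [hmap] at h1
    exact h1
  -- key lintegral bound
  have key : ∀ i, ∫⁻ ω, ENNReal.ofReal (b ^ (η i ω)) ∂μ ≤ ENNReal.ofReal (b / ℓ) := by
    intro i
    rw [show ∫⁻ ω, ENNReal.ofReal (b ^ (η i ω)) ∂μ
        = ∫⁻ j, ENNReal.ofReal (b ^ j) ∂(μ.map (η i)) from
      (lintegral_map (f := fun j : ℕ => ENNReal.ofReal (b ^ j))
        measurable_from_top (hmeas i)).symm, lintegral_countable']
    rw [tsum_eq_zero_add' ENNReal.summable]
    have h0 : ENNReal.ofReal (b ^ (0:ℕ)) * (μ.map (η i)) {0} = 0 := by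
      rw [hmap, hzero i, mul_zero]
    rw [h0, zero_add]
    have hterm : ∀ k : ℕ, ENNReal.ofReal (b ^ (k + 1)) * (μ.map (η i)) {k + 1}
        = ENNReal.ofReal ((b * p i) * (b * (1 - p i)) ^ k) := by
      intro k
      rw [hmap, hgeo i (k + 1) (by omega), ← ENNReal.ofReal_mul (by positivity)]
      congr 1
      simp only [Nat.add_sub_cancel]
      rw [mul_pow, pow_succ]
      ring
    calc ∑' k : ℕ, ENNReal.ofReal (b ^ (k + 1)) * (μ.map (η i)) {k + 1}
        = ∑' k : ℕ, ENNReal.ofReal ((b * p i) * (b * (1 - p i)) ^ k) := by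
          congr 1; ext k; exact hterm k
      _ = ENNReal.ofReal (∑' k : ℕ, (b * p i) * (b * (1 - p i)) ^ k) := by
          rw [ENNReal.ofReal_tsum_of_nonneg (fun k => mul_nonneg (mul_nonneg hb0.le (hq0 i).le) (pow_nonneg (hbq0 i) k))]
          exact (summable_geometric_of_lt_one (hbq0 i) (hbq1 i)).mul_left _
      _ ≤ ENNReal.ofReal (b / ℓ) := by
          apply ENNReal.ofReal_le_ofReal
          rw [tsum_mul_left, tsum_geometric_of_lt_one (hbq0 i) (hbq1 i),
            mul_comm, ← div_eq_inv_mul, div_le_div_iff₀ (by have := hrℓ i; linarith) hℓ0]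
          have h1 : b * p i * ℓ ≤ b * (ℓ / 2) := by
            nlinarith [mul_nonneg (mul_nonneg hb0.le hℓ0.le)
              (show (0:ℝ) ≤ 1 / 2 - p i by linarith [hq2 i])]
          have h2 : b * (ℓ / 2) ≤ b * (1 - b * (1 - p i)) :=
            mul_le_mul_of_nonneg_left (hrℓ i) hb0.le
          linarith
  -- the real-valued random variables
  set X : Fin n → Ω → ℝ := fun i ω => (η i ω : ℝ) with hXdef
  have hXmeas : ∀ i, Measurable (X i) := fun i =>
    measurable_from_top.comp (hmeas i)
  have hXind : iIndepFun X μ :=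
    hind.comp (fun _ (k : ℕ) => (k : ℝ)) (fun _ => measurable_from_top)
  have hfb : ∀ i ω, Real.exp (t * X i ω) = b ^ (η i ω) := by
    intro i ω
    rw [hXdef, mul_comm, Real.exp_nat_mul, hexp]
  -- integrability
  have hint : ∀ i, Integrable (fun ω => Real.exp (t * X i ω)) μ := by
    intro i
    refine ⟨(((hXmeas i).const_mul t).exp).aestronglyMeasurable, ?_⟩
    rw [hasFiniteIntegral_iff_ofReal (Filter.Eventually.of_forall fun ω => (Real.exp_pos _).le)]
    calc ∫⁻ ω, ENNReal.ofReal (Real.exp (t * X i ω)) ∂μ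
        = ∫⁻ ω, ENNReal.ofReal (b ^ (η i ω)) ∂μ := by
          congr 1; ext ω; rw [hfb]
      _ ≤ ENNReal.ofReal (b / ℓ) := key i
      _ < ⊤ := ENNReal.ofReal_lt_top
  -- mgf bound
  have hmgf : ∀ i, mgf (X i) μ t ≤ b / ℓ := by
    intro i
    rw [mgf, integral_eq_lintegral_of_nonneg_ae
      (Filter.Eventually.of_forall fun ω => (Real.exp_pos _).le)
      (((hXmeas i).const_mul t).exp).aestronglyMeasurable]
    have heq : ∫⁻ ω, ENNReal.ofReal (Real.exp (t * X i ω)) ∂μ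
        = ∫⁻ ω, ENNReal.ofReal (b ^ (η i ω)) ∂μ := by
      congr 1; ext ω; rw [hfb]
    rw [heq]
    calc (∫⁻ ω, ENNReal.ofReal (b ^ (η i ω)) ∂μ).toReal
        ≤ (ENNReal.ofReal (b / ℓ)).toReal :=
          ENNReal.toReal_mono ENNReal.ofReal_ne_top (key i)
      _ = b / ℓ := ENNReal.toReal_ofReal (by positivity)
  -- Chernoff bound
  have hchern := measure_ge_le_exp_mul_mgf (X := ∑ i, X i) (μ := μ) v ht.le
    (hXind.integrable_exp_mul_sum hXmeas (fun i _ => hint i))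
  rw [hXind.mgf_sum hXmeas] at hchern
  -- assemble
  have hsub : {ω | v < ∑ i, (η i ω : ℝ)} ⊆ {ω | v ≤ (∑ i, X i) ω} := by
    intro ω hω
    simp only [Set.mem_setOf_eq, Finset.sum_apply] at *
    exact hω.le
  have hRHS : Real.exp (-t * v) * ∏ i, mgf (X i) μ t
      ≤ b ^ ((n : ℝ) - v) * (1 / ℓ) ^ n := by
    have hprod : ∏ i : Fin n, mgf (X i) μ t ≤ (b / ℓ) ^ n := by
      calc ∏ i : Fin n, mgf (X i) μ t ≤ ∏ _i : Fin n, (b / ℓ) :=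
            Finset.prod_le_prod (fun i _ => mgf_nonneg) (fun i _ => hmgf i)
        _ = (b / ℓ) ^ n := by rw [Finset.prod_const, Finset.card_univ, Fintype.card_fin]
    have hexpv : Real.exp (-t * v) = b ^ (-v : ℝ) := by
      rw [Real.rpow_def_of_pos hb0, htdef]; ring_nf
    calc Real.exp (-t * v) * ∏ i, mgf (X i) μ t
        ≤ Real.exp (-t * v) * (b / ℓ) ^ n :=
          mul_le_mul_of_nonneg_left hprod (Real.exp_pos _).le
      _ = b ^ ((n : ℝ) - v) * (1 / ℓ) ^ n := by
          rw [hexpv, sub_eq_add_neg, Real.rpow_add hb0, Real.rpow_natCast,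
            div_pow, one_div, inv_pow]
          rw [div_eq_mul_inv]
          ring
  have hfin : (μ {ω | v < ∑ i, (η i ω : ℝ)}).toReal
      ≤ b ^ ((n : ℝ) - v) * (1 / ℓ) ^ n := by
    calc (μ {ω | v < ∑ i, (η i ω : ℝ)}).toReal
        ≤ (μ {ω | v ≤ (∑ i, X i) ω}).toReal :=
          ENNReal.toReal_mono (measure_ne_top μ _) (measure_mono hsub)
      _ ≤ Real.exp (-t * v) * ∏ i, mgf (X i) μ t := hchern
      _ ≤ b ^ ((n : ℝ) - v) * (1 / ℓ) ^ n := hRHS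
  rw [← ENNReal.ofReal_toReal (measure_ne_top μ {ω | v < ∑ i, (η i ω : ℝ)})]
  exact ENNReal.ofReal_le_ofReal hfin
end

section
/- Acceptance rate bounds for private rejection sampling: let X and Y be countable types, let R̃ : X → PMF(Y) satisfy R̃(x) ≈_{2ε} R̃(x') for all x, x' ∈ X (pure 2ε-differential privacy, ε ≥ 0), let D be a probability mass function on X, and let y ∈ Y and u* ∈ X be such that R̃(u*)(y) > 0 and R̃(u)(y) ≤ R̃(u*)(y) for all u ∈ X. Then the acceptance probability p := ∑_{x ∈ X} D(x) · R̃(x)(y)/(2·R̃(u*)(y)) satisfies 1/(2e^{2ε}) ≤ p ≤ 1/2. -/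
open scoped ENNReal

/-- Acceptance rate bounds for private rejection sampling: if `R̃` is a pure
`2ε`-differentially private local randomizer and `u*` maximizes the probability
of the outcome `y`, then the acceptance probability
`∑_x D(x)·R̃(x)(y)/(2·R̃(u*)(y))` lies in `[1/(2e^{2ε}), 1/2]`. -/
theorem acceptance_rate_bounds {X Y : Type*} [Countable X] [Countable Y]
    (ε : ℝ) (hε : 0 ≤ ε) (Rt : X → PMF Y)
    (hdp : ∀ x x' : X, ApproxDP (2 * ε) 0 (Rt x) (Rt x'))
    (D : PMF X) (y : Y) (ustar : X)
    (hpos : 0 < Rt ustar y)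
    (hmax : ∀ u : X, Rt u y ≤ Rt ustar y) :
    1 / (2 * Real.exp (2 * ε)) ≤
        (∑' x : X, (D x).toReal * ((Rt x y).toReal / (2 * (Rt ustar y).toReal))) ∧
      (∑' x : X, (D x).toReal * ((Rt x y).toReal / (2 * (Rt ustar y).toReal))) ≤ 1 / 2 := by
  have hne : ∀ (x : X), Rt x y ≠ ⊤ := fun x => PMF.apply_ne_top _ _
  have hDne : ∀ x : X, D x ≠ ⊤ := fun x => PMF.apply_ne_top _ _
  have hcstar : 0 < (Rt ustar y).toReal :=
    ENNReal.toReal_pos hpos.ne' (hne ustar)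
  have hsingle : ∀ x : X, pmfProb (Rt x) {y} = (Rt x y).toReal := by
    intro x
    simp [pmfProb, PMF.toOuterMeasure_apply_singleton]
  -- lower bound on each R̃(x)(y)
  have hlow : ∀ x : X, (Rt ustar y).toReal ≤ Real.exp (2 * ε) * (Rt x y).toReal := by
    intro x
    have := ((hdp x ustar) {y}).2
    rw [hsingle, hsingle, add_zero] at this
    exact this
  -- upper bound
  have hup : ∀ x : X, (Rt x y).toReal ≤ (Rt ustar y).toReal := fun x =>
    ENNReal.toReal_mono (hne ustar) (hmax x)
  have hDnonneg : ∀ x : X, (0:ℝ) ≤ (D x).toReal := fun x => ENNReal.toReal_nonneg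
  have hDsummable : Summable fun x : X => (D x).toReal :=
    ENNReal.summable_toReal (by rw [D.tsum_coe]; exact ENNReal.one_ne_top)
  have hDsum : (∑' x : X, (D x).toReal) = 1 := by
    rw [← ENNReal.tsum_toReal_eq hDne, D.tsum_coe, ENNReal.toReal_one]
  have hexp : 0 < Real.exp (2 * ε) := Real.exp_pos _
  set c : ℝ := (Rt ustar y).toReal with hc
  -- term bounds
  have hterm_nonneg : ∀ x : X, (0:ℝ) ≤ (D x).toReal * ((Rt x y).toReal / (2 * c)) := by
    intro x
    have : (0:ℝ) ≤ (Rt x y).toReal / (2 * c) :=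
      div_nonneg ENNReal.toReal_nonneg (by positivity)
    exact mul_nonneg (hDnonneg x) this
  have hterm_up : ∀ x : X, (D x).toReal * ((Rt x y).toReal / (2 * c)) ≤ (D x).toReal * (1/2) := by
    intro x
    apply mul_le_mul_of_nonneg_left _ (hDnonneg x)
    rw [div_le_iff₀ (by positivity)]
    calc (Rt x y).toReal ≤ c := hup x
    _ = 1/2 * (2 * c) := by ring
  have hterm_low : ∀ x : X, (D x).toReal * (1 / (2 * Real.exp (2 * ε))) ≤
      (D x).toReal * ((Rt x y).toReal / (2 * c)) := by
    intro x
    apply mul_le_mul_of_nonneg_left _ (hDnonneg x)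
    rw [div_le_div_iff₀ (by positivity) (by positivity)]
    have := hlow x
    nlinarith [hlow x, hcstar]
  have hsummable : Summable fun x : X => (D x).toReal * ((Rt x y).toReal / (2 * c)) :=
    Summable.of_nonneg_of_le hterm_nonneg hterm_up (hDsummable.mul_right _)
  constructor
  · calc 1 / (2 * Real.exp (2 * ε))
        = ∑' x : X, (D x).toReal * (1 / (2 * Real.exp (2 * ε))) := by
          rw [tsum_mul_right, hDsum, one_mul]
      _ ≤ _ := Summable.tsum_le_tsum hterm_low (hDsummable.mul_right _) hsummable
  · calc (∑' x : X, (D x).toReal * ((Rt x y).toReal / (2 * c)))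
        ≤ ∑' x : X, (D x).toReal * (1/2) :=
          Summable.tsum_le_tsum hterm_up hsummable (hDsummable.mul_right _)
      _ = 1/2 := by rw [tsum_mul_right, hDsum, one_mul]
end

section
/- Bayesian re-sampling identity (n users with an aggregator, Claim that M₂(D^n) is identical to M₁(D^n)): let X, Y₁, Y₂, Z be countable types, n a positive integer, D a probability mass function on X, R_1, …, R_n : X → PMF(Y₁ × Y₂), and A : (Y₁)^n → PMF(Z). Write R_{i,1}(x)(y₁) = ∑_{y₂} R_i(x)(y₁,y₂). Process M₁: independently for each i ∈ [n], sample x_i ~ D and (y_{i,1}, y_{i,2}) ~ R_i(x_i); then sample z ~ A(y_{1,1},…,y_{n,1}); output (z, y_{1,2}, …, y_{n,2}). Process M₂: independently for each i, sample x_i ~ D and y_{i,1} with law R_{i,1}(x_i); sample z ~ A(y_{1,1},…,y_{n,1}); then independently for each i, sample x̂_i from the posterior law Pr[x̂_i = v] = D(v)·R_{i,1}(v)(y_{i,1}) / ∑_w D(w)·R_{i,1}(w)(y_{i,1}) and sample y_{i,2} from the conditional law Pr[y_{i,2} = u] = R_i(x̂_i)(y_{i,1},u)/R_{i,1}(x̂_i)(y_{i,1});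 output (z, y_{1,2}, …, y_{n,2}). Then the output distributions of M₁ and M₂ on Z × (Y₂)^n are identical. -/
open scoped ENNReal

/-!
Conditioning on the first message `y i` and then re-sampling `x` from the posterior and the
second message from the conditional law reproduces the joint law of `(x, y i, u i)`: for each
user, the normalising constant of the posterior cancels against the marginal probability of
`y i`, and the conditional probability cancels against the marginal `R_{i,1}(v)(y i)`. Since
the users are independent given `y`, this cancellation happens factor by factor in the product.
-/

namespace PMF

variable {α β : Type*}

theorem tsum_apply_mk_le_one (p : PMF (α × β)) (a : α) : ∑' b, p (a, b) ≤ 1 :=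
  (ENNReal.tsum_comp_le_tsum_of_injective (Prod.mk_right_injective a) p).trans_eq p.tsum_coe

theorem summable_toReal (p : PMF α) : Summable fun a => (p a).toReal :=
  ENNReal.summable_toReal (p.tsum_coe ▸ ENNReal.one_ne_top)

theorem summable_toReal_apply_mk (p : PMF (α × β)) (a : α) :
    Summable fun b => (p (a, b)).toReal :=
  ENNReal.summable_toReal (ne_top_of_le_ne_top ENNReal.one_ne_top (p.tsum_apply_mk_le_one a))

theorem tsum_toReal_apply_mk_le_one (p : PMF (α × β)) (a : α) :
    ∑' b, (p (a, b)).toReal ≤ 1 := by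
  rw [← ENNReal.tsum_toReal_eq fun _ => p.apply_ne_top _]
  exact ENNReal.toReal_le_of_le_ofReal zero_le_one (by simpa using p.tsum_apply_mk_le_one a)

theorem toReal_apply_le_tsum_toReal_apply_mk (p : PMF (α × β)) (a : α) (b : β) :
    (p (a, b)).toReal ≤ ∑' b', (p (a, b')).toReal :=
  (p.summable_toReal_apply_mk a).le_tsum b fun _ _ => ENNReal.toReal_nonneg

end PMF

theorem mul_posterior_mul_conditional {M d m r : ℝ} (hM : M = 0 → d * m = 0)
    (hm : m = 0 → r = 0) : M * (d * m / M * (r / m)) = d * r := by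
  rcases eq_or_ne m 0 with hm0 | hm0
  · simp [hm0, hm hm0]
  rcases eq_or_ne M 0 with hM0 | hM0
  · rcases mul_eq_zero.mp (hM hM0) with hd | hm'
    · simp [hd]
    · exact absurd hm' hm0
  · field_simp

/-- Bayes' rule for one user: `d` is the prior, `m` the likelihood of the observed first
message and `r ≤ m` the joint likelihood of the first and second message. -/
theorem tsum_mul_tsum_posterior_mul_conditional {ι : Type*} {d m r : ι → ℝ} (hd : 0 ≤ d)
    (hr : 0 ≤ r) (hrm : r ≤ m) (hsum : Summable fun v => d v * m v) :
    (∑' w, d w * m w) * ∑' v, (d v * m v / ∑' w, d w * m w) * (r v / m v) =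
      ∑' v, d v * r v := by
  have hdm : ∀ v, 0 ≤ d v * m v := fun v => mul_nonneg (hd v) ((hr v).trans (hrm v))
  rw [← tsum_mul_left]
  refine tsum_congr fun v => mul_posterior_mul_conditional (fun hM => ?_)
    fun hm => le_antisymm (hm ▸ hrm v) (hr v)
  exact le_antisymm (hM ▸ hsum.le_tsum v fun w _ => hdm w) (hdm v)

theorem PMF.tsum_marginal_mul_tsum_posterior_mul_conditional {X Y₁ Y₂ : Type*} (D : PMF X)
    (p : X → PMF (Y₁ × Y₂)) (a : Y₁) (b : Y₂) :
    (∑' x, (D x).toReal * ∑' y₂, (p x (a, y₂)).toReal) *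
        ∑' v, ((D v).toReal * (∑' y₂, (p v (a, y₂)).toReal) /
            ∑' w, (D w).toReal * ∑' y₂, (p w (a, y₂)).toReal) *
          ((p v (a, b)).toReal / ∑' y₂, (p v (a, y₂)).toReal) =
      ∑' x, (D x).toReal * (p x (a, b)).toReal := by
  refine tsum_mul_tsum_posterior_mul_conditional (fun _ => ENNReal.toReal_nonneg)
    (fun _ => ENNReal.toReal_nonneg) (fun v => (p v).toReal_apply_le_tsum_toReal_apply_mk a b) ?_
  refine D.summable_toReal.of_nonneg_of_le
    (fun v => mul_nonneg ENNReal.toReal_nonneg (tsum_nonneg fun _ => ENNReal.toReal_nonneg))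
    fun v => ?_
  exact mul_le_of_le_one_right ENNReal.toReal_nonneg ((p v).tsum_toReal_apply_mk_le_one a)

theorem bayesian_resampling_n_general {X Y₁ Y₂ Z : Type*}
    (n : ℕ) (D : PMF X)
    (R : Fin n → X → PMF (Y₁ × Y₂)) (A : (Fin n → Y₁) → PMF Z) :
    ∀ (z : Z) (u : Fin n → Y₂),
      (∑' y : Fin n → Y₁,
        (∏ i : Fin n, ∑' x : X, (D x).toReal * ∑' y₂ : Y₂, (R i x (y i, y₂)).toReal) *
          (A y z).toReal *
          ∏ i : Fin n,
            ∑' v : X,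
              ((D v).toReal * (∑' y₂ : Y₂, (R i v (y i, y₂)).toReal) /
                  ∑' w : X, (D w).toReal * ∑' y₂ : Y₂, (R i w (y i, y₂)).toReal) *
                ((R i v (y i, u i)).toReal / ∑' y₂ : Y₂, (R i v (y i, y₂)).toReal)) =
      ∑' y : Fin n → Y₁,
        (∏ i : Fin n, ∑' x : X, (D x).toReal * (R i x (y i, u i)).toReal) *
          (A y z).toReal := by
  intro z u
  refine tsum_congr fun y => ?_
  rw [mul_right_comm, ← Finset.prod_mul_distrib]
  simp_rw [D.tsum_marginal_mul_tsum_posterior_mul_conditional]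

/-- Bayesian re-sampling identity (`n` users with an aggregator `A`): the output
law of process `M₂` (sample each first message from the marginal, aggregate via
`A`, then re-sample each user's data from the posterior given their first
message and generate the second message from the conditional law) equals the
output law of process `M₁` (each user samples both messages from `R i`
directly, then `A` aggregates the first messages), as distributions on
`Z × (Y₂)ⁿ`. (The mass functions agree pointwise; by Lean's convention
division by zero is zero, so terms with zero denominator contribute zero.) -/
theorem bayesian_resampling_n {X Y₁ Y₂ Z : Type*}
    [Countable X] [Countable Y₁] [Countable Y₂] [Countable Z]
    (n : ℕ) (hn : 0 < n) (D : PMF X)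
    (R : Fin n → X → PMF (Y₁ × Y₂)) (A : (Fin n → Y₁) → PMF Z) :
    ∀ (z : Z) (u : Fin n → Y₂),
      (∑' y : Fin n → Y₁,
        (∏ i : Fin n, ∑' x : X, (D x).toReal * ∑' y₂ : Y₂, (R i x (y i, y₂)).toReal) *
          (A y z).toReal *
          ∏ i : Fin n,
            ∑' v : X,
              ((D v).toReal * (∑' y₂ : Y₂, (R i v (y i, y₂)).toReal) /
                  ∑' w : X, (D w).toReal * ∑' y₂ : Y₂, (R i w (y i, y₂)).toReal) *
                ((R i v (y i, u i)).toReal / ∑' y₂ : Y₂, (R i v (y i, y₂)).toReal)) =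
      ∑' y : Fin n → Y₁,
        (∏ i : Fin n, ∑' x : X, (D x).toReal * (R i x (y i, u i)).toReal) *
          (A y z).toReal :=
  bayesian_resampling_n_general n D R A
end
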